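/- For all a with 3 < a ≤ 3.7, the improved bound exceeds the old one: (a-2)·(12a + 9 + (a-2)(4a-3)·L) / (16·(a - 1/2)²·(3 + (a-2)·L)) ≥ (a-2)(8a+3)/(8(2a-1)²), where L = log(1 + 1/(a-2)). -/

import Mathlib

/-!
Both bounds carry the factor `(a - 2) / (2a - 1)²`, and after clearing denominators their
difference is `9 (a - 2) (1 - (a - 2) L) / (8 (2a - 1)² (3 + (a - 2) L))`. So the new bound is
at least the old one exactly when `(a - 2) L ≤ 1`, which is `log (1 + x) ≤ x` at `x = 1 / (a - 2)`.
-/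

open Real

theorem mul_log_one_add_inv_le_one {t : ℝ} (ht : 0 < t) : t * log (1 + 1 / t) ≤ 1 := by
  have hlog : log (1 + 1 / t) ≤ 1 / t := by
    linarith [log_le_sub_one_of_pos (x := 1 + 1 / t) (by positivity)]
  calc t * log (1 + 1 / t) ≤ t * (1 / t) := mul_le_mul_of_nonneg_left hlog ht.le
    _ = 1 := by field_simp

namespace LarcherBound

noncomputable def oldBound (a : ℝ) : ℝ :=
  (a - 2) * (8 * a + 3) / (8 * (2 * a - 1) ^ 2)

noncomputable def newBound (a L : ℝ) : ℝ :=
  (a - 2) * (12 * a + 9 + (a - 2) * (4 * a - 3) * L) /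
    (16 * (a - 1 / 2) ^ 2 * (3 + (a - 2) * L))

theorem newBound_sub_oldBound {a L : ℝ} (ha : 2 * a - 1 ≠ 0) (hL : 3 + (a - 2) * L ≠ 0) :
    newBound a L - oldBound a =
      9 * (a - 2) * (1 - (a - 2) * L) / (8 * (2 * a - 1) ^ 2 * (3 + (a - 2) * L)) := by
  have ha' : a - 1 / 2 ≠ 0 := fun h => ha (by linarith)
  unfold newBound oldBound
  field_simp
  ring

theorem oldBound_le_newBound {a L : ℝ} (ha : 2 ≤ a) (hL : 0 ≤ L) (hle : (a - 2) * L ≤ 1) :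
    oldBound a ≤ newBound a L := by
  have hden : 0 < 3 + (a - 2) * L := by nlinarith
  rw [← sub_nonneg, newBound_sub_oldBound (by linarith) hden.ne']
  have hnum : 0 ≤ 9 * (a - 2) * (1 - (a - 2) * L) := by
    apply mul_nonneg <;> linarith
  exact div_nonneg hnum (by positivity)

end LarcherBound

theorem new_bound_ge_old_general (a : ℝ) (h1 : 3 < a) :
    (a - 2) * (8 * a + 3) / (8 * (2 * a - 1) ^ 2) ≤
      (a - 2) * (12 * a + 9 + (a - 2) * (4 * a - 3) * Real.log (1 + 1 / (a - 2))) /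
        (16 * (a - 1 / 2) ^ 2 * (3 + (a - 2) * Real.log (1 + 1 / (a - 2)))) := by
  have ht : 0 < a - 2 := by linarith
  exact LarcherBound.oldBound_le_newBound (by linarith) (log_nonneg (by simp [ht.le]))
    (mul_log_one_add_inv_le_one ht)

theorem new_bound_ge_old (a : ℝ) (h1 : 3 < a) (h2 : a ≤ 3.7) :
    (a - 2) * (8 * a + 3) / (8 * (2 * a - 1) ^ 2) ≤
      (a - 2) * (12 * a + 9 + (a - 2) * (4 * a - 3) * Real.log (1 + 1 / (a - 2))) /
        (16 * (a - 1 / 2) ^ 2 * (3 + (a - 2) * Real.log (1 + 1 / (a - 2)))) :=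
  new_bound_ge_old_general a h1
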